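/- arXiv:1810.08308 — 3 statements merged into one kernel-verified Lean document; each statement's English description precedes it below -/
import Mathlib

section
/- Let ρ be a finite measure on (−∞, 0] whose density near 0 satisfies c√(−x) ≤ ρ(x) ≤ C√(−x) for x ∈ [−ε, 0]. Then for z = κ + iη with 0 < η, κ ≤ ε/2: (i) Re[m(z)] − m(Re z) = η² ∫ dρ(x)/((κ − x)((κ − x)² + η²)) ≥ c' η²/(κ + η)^{3/2}, and (ii) m(κ) − m(0) = κ ∫ dρ(x)/((κ − x)(−x)) ≥ c'√κ, where m(z) = ∫ dρ(x)/(x − z) is the Stieltjes transform and c' > 0 depends only on c, C, ε and the total mass. -/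
/-!
Both identities are pointwise identities between the integrands, integrated against `μ`. Since
`μ` lives on `(-∞, 0]` and `κ > 0`, every integrand except `x⁻¹` is bounded there; `x⁻¹` is
integrable because near `0` the density is at most `C √|x|`, and `|x|⁻¹ √|x| = |x|^(-1/2)` is
locally integrable. Having a density near `0`, `μ` has no atom at `0`, where the junk value
`0⁻¹ = 0` would break the second identity.

For the lower bounds the kernels are nonnegative on the support, so each integral dominates its
restriction to a window `[-t, -t/2]` with `t = κ + η` resp. `t = κ`. On that window the kernel is
at least `1 / (10 t³)` resp. `1 / (2 t²)`, while the density bound `c √|x|` gives the window mass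
at least `c t^(3/2) / 4`.
-/

open MeasureTheory Complex Set

theorem ae_le_zero_of_measure_Ioi_eq_zero {μ : Measure ℝ} (h : μ (Ioi 0) = 0) :
    ∀ᵐ x ∂μ, x ≤ 0 := by
  rw [ae_iff]
  simp only [not_le]
  exact h

theorem measure_eq_zero_of_restrict_eq_withDensity {α : Type*} [MeasurableSpace α]
    {μ ν : Measure α} {s t : Set α} {f : α → ENNReal}
    (hdens : μ.restrict s = (ν.restrict s).withDensity f) (hts : t ⊆ s) (ht : ν t = 0) :
    μ t = 0 := by
  rw [← Measure.restrict_eq_self μ hts, hdens]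
  exact ((withDensity_absolutelyContinuous _ f).trans
    (Measure.absolutelyContinuous_of_le Measure.restrict_le_self)) ht

theorem ae_lt_zero_of_restrict_eq_withDensity {μ : Measure ℝ} {ε : ℝ} {f : ℝ → ENNReal}
    (hε : 0 ≤ ε) (hsupp : μ (Ioi 0) = 0)
    (hdens : μ.restrict (Icc (-ε) 0) = (volume.restrict (Icc (-ε) 0)).withDensity f) :
    ∀ᵐ x ∂μ, x < 0 := by
  have hatom : μ {0} = 0 := measure_eq_zero_of_restrict_eq_withDensity hdens
    (singleton_subset_iff.2 ⟨by linarith, le_rfl⟩) Real.volume_singleton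
  filter_upwards [ae_le_zero_of_measure_Ioi_eq_zero hsupp, compl_mem_ae_iff.2 hatom] with x hx h0
  exact hx.lt_of_ne h0

theorem mul_measure_le_of_le_density {α : Type*} [MeasurableSpace α]
    {μ ν : Measure α} {s t : Set α} {f : α → ENNReal} {m : ENNReal}
    (hdens : μ.restrict s = (ν.restrict s).withDensity f) (ht : MeasurableSet t) (hts : t ⊆ s)
    (hm : ∀ x ∈ t, m ≤ f x) :
    m * ν t ≤ μ t :=
  calc m * ν t = ∫⁻ _ in t, m ∂ν := (setLIntegral_const t m).symm
    _ ≤ ∫⁻ x in t, f x ∂ν := setLIntegral_mono' ht hm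
    _ = μ t := by
      rw [← Measure.restrict_eq_self μ hts, hdens, withDensity_apply _ ht,
        Measure.restrict_restrict ht, inter_eq_left.2 hts]

theorem mul_measureReal_le_integral {α : Type*} [MeasurableSpace α] {μ : Measure α}
    [IsFiniteMeasure μ] {F : α → ℝ} {t : Set α} {m : ℝ} (hF : Integrable F μ)
    (hF0 : 0 ≤ᵐ[μ] F) (ht : MeasurableSet t) (hm : ∀ x ∈ t, m ≤ F x) :
    m * μ.real t ≤ ∫ x, F x ∂μ :=
  (setIntegral_ge_of_const_le_real ht (measure_ne_top μ t) hm hF.integrableOn).trans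
    (setIntegral_le_integral hF hF0)

theorem le_measureReal_Icc_of_sqrt_le_density {μ : Measure ℝ} [IsFiniteMeasure μ]
    {ε c t : ℝ} {g : ℝ → ℝ} (hc : 0 ≤ c)
    (hdens : μ.restrict (Icc (-ε) 0)
      = (volume.restrict (Icc (-ε) 0)).withDensity (fun x => ENNReal.ofReal (g x)))
    (hg : ∀ x ∈ Icc (-ε) 0, c * √(-x) ≤ g x) (ht : 0 < t) (htε : t ≤ ε) :
    c * t * √t / 4 ≤ μ.real (Icc (-t) (-(t / 2))) := by
  have hsub : Icc (-t) (-(t / 2)) ⊆ Icc (-ε) 0 := Icc_subset_Icc (by linarith) (by linarith)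
  have hdensity : ∀ x ∈ Icc (-t) (-(t / 2)),
      ENNReal.ofReal (c * √(t / 2)) ≤ ENNReal.ofReal (g x) := fun x hx =>
    ENNReal.ofReal_le_ofReal <|
      (mul_le_mul_of_nonneg_left (Real.sqrt_le_sqrt (by linarith [hx.2])) hc).trans (hg x (hsub hx))
  have hmeas := mul_measure_le_of_le_density hdens measurableSet_Icc hsub hdensity
  rw [Real.volume_Icc, ← ENNReal.ofReal_mul (by positivity),
    ENNReal.ofReal_le_iff_le_toReal (measure_ne_top μ _), ← measureReal_def,
    show -(t / 2) - -t = t / 2 by ring] at hmeas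
  have hsqrt : √t / 2 ≤ √(t / 2) := by
    rw [Real.le_sqrt (by positivity) (by positivity), div_pow, Real.sq_sqrt ht.le]
    linarith
  calc c * t * √t / 4 = c * (√t / 2) * (t / 2) := by ring
    _ ≤ c * √(t / 2) * (t / 2) := by gcongr
    _ ≤ μ.real (Icc (-t) (-(t / 2))) := hmeas

theorem integrableOn_inv_mul_sqrt_neg (ε : ℝ) :
    IntegrableOn (fun x : ℝ => x⁻¹ * √(-x)) (Icc (-ε) 0) := by
  have hpow : IntegrableOn (fun x : ℝ => (-x) ^ (-(1 / 2) : ℝ)) (Icc (-ε) 0) := by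
    have := (intervalIntegral.intervalIntegrable_rpow' (r := -(1 / 2)) (by norm_num)
      (a := 0) (b := ε)).comp_sub_left 0
    simp only [sub_zero, zero_sub] at this
    exact ((intervalIntegrable_iff' enorm_ne_top).1 this.symm).mono_set Icc_subset_uIcc
  refine hpow.mono' (by fun_prop) (ae_restrict_of_forall_mem measurableSet_Icc fun x hx => ?_)
  rcases hx.2.lt_or_eq with hx0 | rfl
  · rw [norm_mul, norm_inv, Real.norm_of_nonpos hx0.le, Real.norm_of_nonneg (Real.sqrt_nonneg _),
      Real.rpow_neg (by linarith), ← Real.sqrt_eq_rpow, inv_mul_eq_div,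
      Real.sqrt_div_self', one_div]
  · simp

theorem integrable_inv_of_density_le_sqrt {μ : Measure ℝ} [IsFiniteMeasure μ] {ε C : ℝ}
    {g : ℝ → ℝ} (hε : 0 < ε) (hC : 0 ≤ C) (hnonpos : ∀ᵐ x ∂μ, x ≤ 0)
    (hdens : μ.restrict (Icc (-ε) 0)
      = (volume.restrict (Icc (-ε) 0)).withDensity (fun x => ENNReal.ofReal (g x)))
    (hg : ∀ x ∈ Icc (-ε) 0, g x ≤ C * √(-x)) :
    Integrable (fun x : ℝ => x⁻¹) μ := by
  rw [← integrableOn_univ, ← union_compl_self (Icc (-ε) 0), integrableOn_union]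
  constructor
  · have hdom : μ.restrict (Icc (-ε) 0) ≤ (volume.restrict (Icc (-ε) 0)).withDensity
        (fun x => ENNReal.ofReal (C * √(-x))) :=
      hdens ▸ withDensity_mono (ae_restrict_of_forall_mem measurableSet_Icc
        fun x hx => ENNReal.ofReal_le_ofReal (hg x hx))
    refine Integrable.mono_measure ?_ hdom
    rw [integrable_withDensity_iff (by fun_prop) (ae_of_all _ fun _ => ENNReal.ofReal_lt_top)]
    refine ((integrableOn_inv_mul_sqrt_neg ε).const_mul C).congr (ae_of_all _ fun x => ?_)
    dsimp only
    rw [ENNReal.toReal_ofReal (by positivity)]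
    ring
  · refine Integrable.of_bound (by fun_prop) ε⁻¹ ?_
    filter_upwards [ae_restrict_of_ae hnonpos, ae_restrict_mem measurableSet_Icc.compl]
      with x hx hxε
    have hxε : x < -ε := by
      by_contra! h
      exact hxε ⟨h, hx⟩
    rw [norm_inv, Real.norm_of_nonpos hx]
    exact inv_anti₀ hε (by linarith)

theorem ofReal_sub_ofReal_add_mul_I (x κ η : ℝ) :
    (x : ℂ) - ((κ : ℂ) + η * I) = ⟨x - κ, -η⟩ :=
  Complex.ext (by simp) (by simp)

theorem re_one_div_ofReal_sub {x κ : ℝ} (η : ℝ) (hx : x ≠ κ) :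
    (1 / ((x : ℂ) - ((κ : ℂ) + η * I))).re - (x - κ)⁻¹
      = η ^ 2 * ((κ - x) * ((κ - x) ^ 2 + η ^ 2))⁻¹ := by
  have hsub : x - κ ≠ 0 := sub_ne_zero.2 hx
  have hsub' : κ - x ≠ 0 := sub_ne_zero.2 hx.symm
  have hnormSq : (x - κ) * (x - κ) + -η * -η ≠ 0 := by nlinarith [sq_pos_of_ne_zero hsub]
  rw [ofReal_sub_ofReal_add_mul_I, one_div, inv_re, normSq_mk]
  field_simp
  ring

theorem integrable_one_div_ofReal_sub {μ : Measure ℝ} [IsFiniteMeasure μ]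
    (hnonpos : ∀ᵐ x ∂μ, x ≤ 0) {κ : ℝ} (hκ : 0 < κ) (η : ℝ) :
    Integrable (fun x : ℝ => 1 / ((x : ℂ) - ((κ : ℂ) + η * I))) μ := by
  refine Integrable.of_bound (Measurable.aestronglyMeasurable (by fun_prop)) κ⁻¹ ?_
  filter_upwards [hnonpos] with x hx
  rw [norm_div, norm_one, one_div, ofReal_sub_ofReal_add_mul_I]
  refine inv_anti₀ hκ ((le_abs.2 (Or.inr ?_)).trans (abs_re_le_norm _))
  show κ ≤ -(x - κ)
  linarith

theorem integrable_inv_sub {μ : Measure ℝ} [IsFiniteMeasure μ] (hnonpos : ∀ᵐ x ∂μ, x ≤ 0)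
    {κ : ℝ} (hκ : 0 < κ) :
    Integrable (fun x : ℝ => (x - κ)⁻¹) μ := by
  refine Integrable.of_bound (by fun_prop) κ⁻¹ ?_
  filter_upwards [hnonpos] with x hx
  rw [norm_inv, Real.norm_of_nonpos (by linarith)]
  exact inv_anti₀ hκ (by linarith)

theorem re_integral_one_div_sub_sub_integral_inv_sub {μ : Measure ℝ} [IsFiniteMeasure μ]
    (hnonpos : ∀ᵐ x ∂μ, x ≤ 0) {κ : ℝ} (hκ : 0 < κ) (η : ℝ) :
    (∫ x : ℝ, (1 : ℂ) / ((x : ℂ) - ((κ : ℂ) + η * I)) ∂μ).re - ∫ x : ℝ, (x - κ)⁻¹ ∂μ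
      = η ^ 2 * ∫ x : ℝ, ((κ - x) * ((κ - x) ^ 2 + η ^ 2))⁻¹ ∂μ := by
  have hstieltjes := integrable_one_div_ofReal_sub hnonpos hκ η
  have hre : (∫ x : ℝ, (1 : ℂ) / ((x : ℂ) - ((κ : ℂ) + η * I)) ∂μ).re
      = ∫ x : ℝ, ((1 : ℂ) / ((x : ℂ) - ((κ : ℂ) + η * I))).re ∂μ := (integral_re hstieltjes).symm
  have hre_int : Integrable (fun x : ℝ => ((1 : ℂ) / ((x : ℂ) - ((κ : ℂ) + η * I))).re) μ :=
    hstieltjes.re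
  rw [hre, ← integral_const_mul, ← integral_sub hre_int (integrable_inv_sub hnonpos hκ)]
  refine integral_congr_ae ?_
  filter_upwards [hnonpos] with x hx
  exact re_one_div_ofReal_sub η (by linarith)

theorem inv_sub_sub_inv_eq {x κ : ℝ} (hx : x ≠ 0) (hxκ : x ≠ κ) :
    (x - κ)⁻¹ - x⁻¹ = κ * ((κ - x) * (-x))⁻¹ := by
  have hsub : x - κ ≠ 0 := sub_ne_zero.2 hxκ
  have hsub' : κ - x ≠ 0 := sub_ne_zero.2 hxκ.symm
  field_simp
  ring

theorem integral_inv_sub_sub_integral_inv {μ : Measure ℝ} [IsFiniteMeasure μ]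
    (hneg : ∀ᵐ x ∂μ, x < 0) (hinv : Integrable (fun x : ℝ => x⁻¹) μ) {κ : ℝ} (hκ : 0 < κ) :
    ∫ x : ℝ, (x - κ)⁻¹ ∂μ - ∫ x : ℝ, x⁻¹ ∂μ = κ * ∫ x : ℝ, ((κ - x) * (-x))⁻¹ ∂μ := by
  rw [← integral_const_mul,
    ← integral_sub (integrable_inv_sub (hneg.mono fun _ => le_of_lt) hκ) hinv]
  refine integral_congr_ae ?_
  filter_upwards [hneg] with x hx
  exact inv_sub_sub_inv_eq hx.ne (by linarith)

theorem integrable_inv_mul_neg {μ : Measure ℝ} [IsFiniteMeasure μ]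
    (hneg : ∀ᵐ x ∂μ, x < 0) (hinv : Integrable (fun x : ℝ => x⁻¹) μ) {κ : ℝ} (hκ : 0 < κ) :
    Integrable (fun x : ℝ => ((κ - x) * (-x))⁻¹) μ := by
  have hdiff := (integrable_inv_sub (hneg.mono fun _ => le_of_lt) hκ).sub hinv
  refine (hdiff.const_mul κ⁻¹).congr ?_
  filter_upwards [hneg] with x hx
  rw [Pi.sub_apply, inv_sub_sub_inv_eq hx.ne (by linarith), inv_mul_cancel_left₀ hκ.ne']

theorem inv_le_inv_mul_sq_add_sq {κ η x : ℝ} (hκ : 0 < κ) (hη : 0 < η)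
    (hx : x ∈ Icc (-(κ + η)) (-((κ + η) / 2))) :
    (10 * (κ + η) ^ 3)⁻¹ ≤ ((κ - x) * ((κ - x) ^ 2 + η ^ 2))⁻¹ := by
  have hpos : 0 < κ - x := by linarith [hx.2]
  have hfirst : κ - x ≤ 2 * (κ + η) := by linarith [hx.1]
  have hsecond : (κ - x) ^ 2 + η ^ 2 ≤ 5 * (κ + η) ^ 2 := by nlinarith
  calc (10 * (κ + η) ^ 3)⁻¹ = ((2 * (κ + η)) * (5 * (κ + η) ^ 2))⁻¹ := by ring
    _ ≤ _ := inv_anti₀ (by positivity) (mul_le_mul hfirst hsecond (by positivity) (by positivity))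

theorem integrable_inv_mul_sq_add_sq {μ : Measure ℝ} [IsFiniteMeasure μ]
    (hnonpos : ∀ᵐ x ∂μ, x ≤ 0) {κ : ℝ} (hκ : 0 < κ) (η : ℝ) :
    Integrable (fun x : ℝ => ((κ - x) * ((κ - x) ^ 2 + η ^ 2))⁻¹) μ := by
  refine Integrable.of_bound (by fun_prop) (κ ^ 3)⁻¹ ?_
  filter_upwards [hnonpos] with x hx
  have hfirst : κ ≤ κ - x := by linarith
  have hsecond : κ ^ 2 ≤ (κ - x) ^ 2 + η ^ 2 := by nlinarith
  rw [norm_inv, Real.norm_of_nonneg (by nlinarith), show κ ^ 3 = κ * κ ^ 2 by ring]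
  exact inv_anti₀ (by positivity) (mul_le_mul hfirst hsecond (by positivity) (by linarith))

theorem le_integral_inv_mul_sq_add_sq {μ : Measure ℝ} [IsFiniteMeasure μ] {ε c : ℝ}
    {g : ℝ → ℝ} (hc : 0 ≤ c) (hnonpos : ∀ᵐ x ∂μ, x ≤ 0)
    (hdens : μ.restrict (Icc (-ε) 0)
      = (volume.restrict (Icc (-ε) 0)).withDensity (fun x => ENNReal.ofReal (g x)))
    (hg : ∀ x ∈ Icc (-ε) 0, c * √(-x) ≤ g x) {κ η : ℝ} (hκ : 0 < κ) (hη : 0 < η)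
    (hκη : κ + η ≤ ε) :
    c / 40 * η ^ 2 / (κ + η) ^ ((3 : ℝ) / 2)
      ≤ η ^ 2 * ∫ x : ℝ, ((κ - x) * ((κ - x) ^ 2 + η ^ 2))⁻¹ ∂μ := by
  set s := κ + η
  have hs : 0 < s := by positivity
  have hnonneg : 0 ≤ᵐ[μ] fun x : ℝ => ((κ - x) * ((κ - x) ^ 2 + η ^ 2))⁻¹ := by
    filter_upwards [hnonpos] with x hx
    have : 0 ≤ κ - x := by linarith
    positivity
  have hrpow : s ^ ((3 : ℝ) / 2) = s * √s := by
    rw [show (3 : ℝ) / 2 = 1 + 1 / 2 by norm_num, Real.rpow_add hs, Real.rpow_one,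
      ← Real.sqrt_eq_rpow]
  calc c / 40 * η ^ 2 / s ^ ((3 : ℝ) / 2) = η ^ 2 * ((10 * s ^ 3)⁻¹ * (c * s * √s / 4)) := by
        rw [hrpow]
        field_simp
        rw [Real.sq_sqrt hs.le]
        ring
    _ ≤ η ^ 2 * ((10 * s ^ 3)⁻¹ * μ.real (Icc (-s) (-(s / 2)))) := by
        gcongr
        exact le_measureReal_Icc_of_sqrt_le_density hc hdens hg hs hκη
    _ ≤ _ := by
        gcongr
        exact mul_measureReal_le_integral (integrable_inv_mul_sq_add_sq hnonpos hκ η) hnonneg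
          measurableSet_Icc fun x hx => inv_le_inv_mul_sq_add_sq hκ hη hx

theorem inv_le_inv_mul_neg {κ x : ℝ} (hκ : 0 < κ) (hx : x ∈ Icc (-κ) (-(κ / 2))) :
    (2 * κ ^ 2)⁻¹ ≤ ((κ - x) * (-x))⁻¹ := by
  have hpos : 0 < -x := by linarith [hx.2]
  have hfirst : κ - x ≤ 2 * κ := by linarith [hx.1]
  have hsecond : -x ≤ κ := by linarith [hx.1]
  calc (2 * κ ^ 2)⁻¹ = ((2 * κ) * κ)⁻¹ := by ring
    _ ≤ _ := inv_anti₀ (by nlinarith) (mul_le_mul hfirst hsecond hpos.le (by positivity))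

theorem le_integral_inv_mul_neg {μ : Measure ℝ} [IsFiniteMeasure μ] {ε c : ℝ}
    {g : ℝ → ℝ} (hc : 0 ≤ c) (hnonpos : ∀ᵐ x ∂μ, x ≤ 0)
    (hdens : μ.restrict (Icc (-ε) 0)
      = (volume.restrict (Icc (-ε) 0)).withDensity (fun x => ENNReal.ofReal (g x)))
    (hg : ∀ x ∈ Icc (-ε) 0, c * √(-x) ≤ g x) {κ : ℝ} (hκ : 0 < κ) (hκε : κ ≤ ε)
    (hint : Integrable (fun x : ℝ => ((κ - x) * (-x))⁻¹) μ) :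
    c / 8 * √κ ≤ κ * ∫ x : ℝ, ((κ - x) * (-x))⁻¹ ∂μ := by
  have hnonneg : 0 ≤ᵐ[μ] fun x : ℝ => ((κ - x) * (-x))⁻¹ := by
    filter_upwards [hnonpos] with x hx
    have : 0 ≤ κ - x := by linarith
    have : 0 ≤ -x := by linarith
    positivity
  calc c / 8 * √κ = κ * ((2 * κ ^ 2)⁻¹ * (c * κ * √κ / 4)) := by
        field_simp
        ring
    _ ≤ κ * ((2 * κ ^ 2)⁻¹ * μ.real (Icc (-κ) (-(κ / 2)))) := by
        gcongr
        exact le_measureReal_Icc_of_sqrt_le_density hc hdens hg hκ hκε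
    _ ≤ _ := by
        gcongr
        exact mul_measureReal_le_integral hint hnonneg measurableSet_Icc
          fun x hx => inv_le_inv_mul_neg hκ hx

theorem stmt_11 (μ : Measure ℝ) [IsFiniteMeasure μ] (ε c C : ℝ)
    (hε : 0 < ε) (hc : 0 < c) (hC : 0 < C)
    (hsupp : μ (Set.Ioi (0:ℝ)) = 0)
    (g : ℝ → ℝ)
    (hdens : μ.restrict (Set.Icc (-ε) 0)
      = (volume.restrict (Set.Icc (-ε) 0)).withDensity (fun x => ENNReal.ofReal (g x)))
    (hg : ∀ x ∈ Set.Icc (-ε) (0:ℝ), c * Real.sqrt (-x) ≤ g x ∧ g x ≤ C * Real.sqrt (-x)) :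
    ∃ c' : ℝ, 0 < c' ∧ ∀ κ η : ℝ, 0 < κ → κ ≤ ε / 2 → 0 < η → η ≤ ε / 2 →
      ((∫ x : ℝ, (1 : ℂ) / ((x : ℂ) - ((κ : ℂ) + η * Complex.I)) ∂μ).re
          - (∫ x : ℝ, (x - κ)⁻¹ ∂μ)
        = η ^ 2 * ∫ x : ℝ, ((κ - x) * ((κ - x) ^ 2 + η ^ 2))⁻¹ ∂μ) ∧
      (c' * η ^ 2 / (κ + η) ^ ((3:ℝ)/2)
        ≤ η ^ 2 * ∫ x : ℝ, ((κ - x) * ((κ - x) ^ 2 + η ^ 2))⁻¹ ∂μ) ∧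
      ((∫ x : ℝ, (x - κ)⁻¹ ∂μ) - (∫ x : ℝ, x⁻¹ ∂μ)
        = κ * ∫ x : ℝ, ((κ - x) * (-x))⁻¹ ∂μ) ∧
      (c' * Real.sqrt κ ≤ κ * ∫ x : ℝ, ((κ - x) * (-x))⁻¹ ∂μ) := by
  have hnonpos := ae_le_zero_of_measure_Ioi_eq_zero hsupp
  have hneg := ae_lt_zero_of_restrict_eq_withDensity hε.le hsupp hdens
  have hinv := integrable_inv_of_density_le_sqrt hε hC.le hnonpos hdens fun x hx => (hg x hx).2
  have hlower : ∀ x ∈ Icc (-ε) 0, c * √(-x) ≤ g x := fun x hx => (hg x hx).1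
  refine ⟨c / 40, by positivity, fun κ η hκ hκε hη hηε => ⟨?_, ?_, ?_, ?_⟩⟩
  · exact re_integral_one_div_sub_sub_integral_inv_sub hnonpos hκ η
  · exact le_integral_inv_mul_sq_add_sq hc.le hnonpos hdens hlower hκ hη (by linarith)
  · exact integral_inv_sub_sub_integral_inv hneg hinv hκ
  · calc c / 40 * √κ ≤ c / 8 * √κ := by gcongr; norm_num
      _ ≤ _ := le_integral_inv_mul_neg hc.le hnonpos hdens hlower hκ (by linarith)
          (integrable_inv_mul_neg hneg hinv hκ)
end

section
/- Let η > 0, κ ∈ ℝ with −κ ≥ η > 0 and |κ| ≤ η^{4/5}. Then ∫_{-∞}^{2κ} |x|^{3/2}/|x − κ − iη|⁴ dx ≤ C|κ|^{-3/2} and ∫_{2κ}^{0} |x|^{3/2}/|x − κ − iη|⁴ dx ≤ C|κ|^{5/2}/η⁴, for an absolute constant C. -/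
open MeasureTheory

lemma aux_comp_neg {f : ℝ → ℝ} {c : ℝ} (hf : IntegrableOn f (Set.Ici (-c))) :
    IntegrableOn (fun x => f (-x)) (Set.Iic c) := by
  have h_map : (volume.restrict (Set.Ici (-c))).map Neg.neg
      = volume.restrict (Set.Iic c) := by
    conv => rhs; rw [← Measure.map_neg_eq_self (volume : Measure ℝ),
      measurableEmbedding_neg.restrict_map]
    simp
  rw [IntegrableOn, ← h_map, measurableEmbedding_neg.integrable_map_iff]
  simpa [Function.comp_def, IntegrableOn] using hf

theorem stmt_12 : ∃ C : ℝ, 0 < C ∧ ∀ κ η : ℝ, 0 < η → η ≤ -κ → |κ| ≤ η ^ ((4:ℝ)/5) →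
    (∫ x in Set.Iic (2 * κ), |x| ^ ((3:ℝ)/2) / ((x - κ) ^ 2 + η ^ 2) ^ 2)
        ≤ C * |κ| ^ (-(3:ℝ)/2) ∧
    (∫ x in (2 * κ)..(0:ℝ), |x| ^ ((3:ℝ)/2) / ((x - κ) ^ 2 + η ^ 2) ^ 2)
        ≤ C * |κ| ^ ((5:ℝ)/2) / η ^ 4 := by
  refine ⟨32, by norm_num, fun κ η hη hηκ _ => ?_⟩
  have hκ : κ < 0 := by nlinarith
  have hκabs : |κ| = -κ := abs_of_neg hκ
  have hden_pos : ∀ x : ℝ, 0 < ((x - κ) ^ 2 + η ^ 2) ^ 2 := fun x => by positivity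
  have hfcont : Continuous (fun x : ℝ => |x| ^ ((3:ℝ)/2) / ((x - κ) ^ 2 + η ^ 2) ^ 2) := by
    refine Continuous.div ?_ (by continuity) (fun x => (hden_pos x).ne')
    exact continuous_abs.rpow_const (fun x => Or.inr (by norm_num))
  have hfnn : ∀ x : ℝ, 0 ≤ |x| ^ ((3:ℝ)/2) / ((x - κ) ^ 2 + η ^ 2) ^ 2 := fun x => by positivity
  constructor
  · -- first part
    set g : ℝ → ℝ := fun x => 16 * (-x) ^ (-(5:ℝ)/2) with hg
    have hbound : ∀ x ∈ Set.Iic (2 * κ),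
        |x| ^ ((3:ℝ)/2) / ((x - κ) ^ 2 + η ^ 2) ^ 2 ≤ g x := by
      intro x hx
      simp only [Set.mem_Iic] at hx
      have hx0 : x < 0 := by nlinarith
      have hnx : 0 < -x := by linarith
      have habs : |x| = -x := abs_of_neg hx0
      have hD : (-x) ^ 4 / 16 ≤ ((x - κ) ^ 2 + η ^ 2) ^ 2 := by
        have hA : x - κ ≤ x/2 := by linarith
        have h1 : (x/2)^2 ≤ (x-κ)^2 := by nlinarith
        have h2 : ((x/2)^2)^2 ≤ ((x-κ)^2+η^2)^2 := by nlinarith [sq_nonneg η, sq_nonneg (x/2)]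
        calc (-x) ^ 4 / 16 = ((x/2)^2)^2 := by ring
          _ ≤ ((x-κ)^2+η^2)^2 := h2
      have hDpos : (0:ℝ) < (-x) ^ 4 / 16 := by positivity
      have h1 : |x| ^ ((3:ℝ)/2) / ((x - κ) ^ 2 + η ^ 2) ^ 2
          ≤ (-x) ^ ((3:ℝ)/2) / ((-x) ^ 4 / 16) := by
        rw [habs]
        exact div_le_div_of_nonneg_left (by positivity) hDpos hD
      refine h1.trans_eq ?_
      have h4 : (-x) ^ (4:ℕ) = (-x) ^ ((4:ℝ)) := by
        rw [← Real.rpow_natCast (-x) 4]; norm_num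
      rw [hg]
      rw [div_div_eq_mul_div, mul_comm, mul_div_assoc, h4, ← Real.rpow_sub hnx]
      norm_num
    have hg_int : IntegrableOn g (Set.Iic (2 * κ)) := by
      refine Integrable.const_mul ?_ 16
      refine aux_comp_neg (f := fun y => y ^ (-(5:ℝ)/2)) ?_
      rw [integrableOn_Ici_iff_integrableOn_Ioi]
      exact integrableOn_Ioi_rpow_of_lt (by norm_num) (by linarith)
    have hf_int : IntegrableOn (fun x => |x| ^ ((3:ℝ)/2) / ((x - κ) ^ 2 + η ^ 2) ^ 2)
        (Set.Iic (2 * κ)) := by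
      refine Integrable.mono' hg_int hfcont.aestronglyMeasurable ?_
      filter_upwards [ae_restrict_mem measurableSet_Iic] with x hx
      rw [Real.norm_of_nonneg (hfnn x)]
      exact hbound x hx
    have hle := setIntegral_mono_on hf_int hg_int measurableSet_Iic hbound
    refine hle.trans ?_
    have : ∫ x in Set.Iic (2 * κ), g x = 16 * ∫ x in Set.Iic (2 * κ), (-x) ^ (-(5:ℝ)/2) := by
      rw [hg, integral_const_mul]
    rw [this, integral_comp_neg_Iic (2*κ) (fun y => y ^ (-(5:ℝ)/2)),
      integral_Ioi_rpow_of_lt (by norm_num) (by linarith)]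
    have h2κ : -(2*κ) = 2 * (-κ) := by ring
    have hexp : (-(5:ℝ)/2 + 1) = -(3:ℝ)/2 := by norm_num
    rw [hexp, h2κ, Real.mul_rpow (by norm_num) (by linarith)]
    have h2le : (2:ℝ) ^ (-(3:ℝ)/2) ≤ 1 :=
      Real.rpow_le_one_of_one_le_of_nonpos (by norm_num) (by norm_num)
    have hκpos : (0:ℝ) < -κ := by linarith
    have hκr : (0:ℝ) ≤ (-κ) ^ (-(3:ℝ)/2) := (Real.rpow_pos_of_pos hκpos _).le
    rw [hκabs]
    calc 16 * (-(2 ^ (-(3:ℝ)/2) * (-κ) ^ (-(3:ℝ)/2)) / (-(3:ℝ)/2))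
        = (32/3) * (2 ^ (-(3:ℝ)/2) * (-κ) ^ (-(3:ℝ)/2)) := by ring
      _ ≤ (32/3) * (1 * (-κ) ^ (-(3:ℝ)/2)) := by
          refine mul_le_mul_of_nonneg_left (mul_le_mul_of_nonneg_right h2le hκr) (by norm_num)
      _ ≤ 32 * (-κ) ^ (-(3:ℝ)/2) := by nlinarith
  · -- second part
    have hab : 2 * κ ≤ (0:ℝ) := by nlinarith
    set M : ℝ := (-(2*κ)) ^ ((3:ℝ)/2) / η ^ 4 with hM
    have h2κpos : (0:ℝ) < -(2*κ) := by linarith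
    have hbound : ∀ x ∈ Set.Icc (2*κ) 0,
        |x| ^ ((3:ℝ)/2) / ((x - κ) ^ 2 + η ^ 2) ^ 2 ≤ M := by
      intro x hx
      obtain ⟨hx1, hx2⟩ := hx
      have habs : |x| ≤ -(2*κ) := by rw [abs_le]; constructor <;> linarith
      have hnum : |x| ^ ((3:ℝ)/2) ≤ (-(2*κ)) ^ ((3:ℝ)/2) :=
        Real.rpow_le_rpow (abs_nonneg x) habs (by norm_num)
      have hden : η ^ 4 ≤ ((x - κ) ^ 2 + η ^ 2) ^ 2 := by nlinarith [sq_nonneg (x-κ), sq_nonneg η]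
      calc |x| ^ ((3:ℝ)/2) / ((x - κ) ^ 2 + η ^ 2) ^ 2
          ≤ |x| ^ ((3:ℝ)/2) / η ^ 4 := by
            refine div_le_div_of_nonneg_left (by positivity) (by positivity) hden
        _ ≤ M := by rw [hM]; exact div_le_div_of_nonneg_right hnum (by positivity)
    have hfint : IntervalIntegrable (fun x => |x| ^ ((3:ℝ)/2) / ((x - κ) ^ 2 + η ^ 2) ^ 2)
        volume (2*κ) 0 := hfcont.intervalIntegrable _ _
    have hMint : IntervalIntegrable (fun _ : ℝ => M) volume (2*κ) 0 :=
      intervalIntegrable_const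
    have hle := intervalIntegral.integral_mono_on hab hfint hMint hbound
    refine hle.trans ?_
    rw [intervalIntegral.integral_const, smul_eq_mul, hM]
    have h52 : (0 - 2*κ) * ((-(2*κ)) ^ ((3:ℝ)/2) / η ^ 4) = (-(2*κ)) ^ ((5:ℝ)/2) / η ^ 4 := by
      rw [show ((5:ℝ)/2) = 1 + (3:ℝ)/2 by norm_num, Real.rpow_add h2κpos, Real.rpow_one]
      ring
    rw [h52, hκabs]
    have h2κeq : -(2*κ) = 2 * (-κ) := by ring
    have hκpos : (0:ℝ) < -κ := by linarith
    rw [h2κeq, Real.mul_rpow (by norm_num) hκpos.le]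
    have h2le : (2:ℝ) ^ ((5:ℝ)/2) ≤ 32 := by
      calc (2:ℝ) ^ ((5:ℝ)/2) ≤ (2:ℝ) ^ ((3:ℝ)) :=
            Real.rpow_le_rpow_of_exponent_le (by norm_num) (by norm_num)
        _ ≤ 32 := by
            rw [show ((3:ℝ)) = ((3:ℕ):ℝ) by norm_num, Real.rpow_natCast]; norm_num
    have hκr : (0:ℝ) ≤ (-κ) ^ ((5:ℝ)/2) := (Real.rpow_pos_of_pos hκpos _).le
    have : 2 ^ ((5:ℝ)/2) * (-κ) ^ ((5:ℝ)/2) ≤ 32 * (-κ) ^ ((5:ℝ)/2) :=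
      mul_le_mul_of_nonneg_right h2le hκr
    exact div_le_div_of_nonneg_right this (by positivity)
end

section
/- Let g : ℂ × ℂ → ℂ satisfy g(z, x) = (V'(x) − V'(z) − (x − z)V''(z)) / (2(x − z)²) for x ≠ z and g(z, z) = V'''(z)/4, where V is entire. Then for each fixed z, x ↦ g(z, x) is entire, and for each fixed x, z ↦ g(z, x) is entire; moreover if μ and ν are finite measures supported in [−b, b] with Stieltjes transforms m_μ, m_ν, and 𝒞 is a contour encircling [−b, b] at distance r ≥ 1, then ∫ g(z, x) d(μ − ν)(x) = −(1/2πi) ∮_𝒞 g(z, w)(m_μ(w) − m_ν(w)) dw, and |∫ g(z, x) d(μ − ν)(x)| ≤ length(𝒞) · sup_{w∈𝒞} |g(z, w)| · sup_{w∈𝒞} |m_μ(w) − m_ν(w)| / (2π). -/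
/-!
Writing `f = V'`, the kernel is `g z x = dslope (dslope f z) z x / 2`, a second divided
difference of an entire function, hence entire in `x`; in `z` it equals
`-dslope (dslope f x - f') x z / 2`, which is entire for the same reason. For the contour
formula, insert the Stieltjes transform into the circle integral and swap the two integrals
(the integrand is bounded because the circle stays at distance `R - b` from `[-b, b]`); the
inner circle integral is then Cauchy's formula `∮ g z w / (x - w) dw = -2πi g z x`.
-/

open MeasureTheory Complex Set Metric Real
open scoped Interval

noncomputable section

section DSlope

variable {𝕜 : Type*} [NontriviallyNormedField 𝕜]

theorem AnalyticAt.two_smul_deriv_dslope_same {E : Type*} [NormedAddCommGroup E]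
    [NormedSpace 𝕜 E] [CompleteSpace E] {f : 𝕜 → E} {c : 𝕜} (hf : AnalyticAt 𝕜 f c) :
    (2 : ℕ) • deriv (dslope f c) c = deriv (deriv f) c := by
  obtain ⟨p, hp⟩ := hf
  have hcoeff : deriv (dslope f c) c = p.coeff 2 := by
    rw [hp.has_fpower_series_dslope_fslope.deriv]
    exact p.coeff_fslope
  have hsecond : deriv (deriv f) = iteratedDeriv 2 f := by
    rw [iteratedDeriv_succ, iteratedDeriv_one]
  obtain ⟨R, hpR⟩ := hp
  rw [hcoeff, hsecond, iteratedDeriv_eq_iteratedFDeriv, ← hpR.factorial_smul]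
  rfl

theorem dslope_dslope_of_ne (f : 𝕜 → 𝕜) {z x : 𝕜} (h : x ≠ z) :
    dslope (dslope f z) z x = (f x - f z - (x - z) * deriv f z) / (x - z) ^ 2 := by
  have hxz : x - z ≠ 0 := sub_ne_zero.mpr h
  rw [dslope_of_ne _ h, slope_def_field, dslope_of_ne _ h, slope_def_field, dslope_same]
  field_simp

theorem dslope_dslope_eq_neg_dslope_sub_deriv [CompleteSpace 𝕜] {f : 𝕜 → 𝕜} {x : 𝕜}
    (hf : AnalyticAt 𝕜 f x) (z : 𝕜) :
    dslope (dslope f z) z x = -dslope (fun w => dslope f x w - deriv f w) x z := by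
  obtain rfl | hzx := eq_or_ne z x
  · have hd : DifferentiableAt 𝕜 (dslope f z) z := by
      obtain ⟨p, hp⟩ := hf
      exact hp.has_fpower_series_dslope_fslope.differentiableAt
    rw [dslope_same, dslope_same, deriv_fun_sub hd hf.deriv.differentiableAt,
      ← hf.two_smul_deriv_dslope_same]
    simp only [two_smul]
    abel
  · have hxz : x - z ≠ 0 := sub_ne_zero.mpr hzx.symm
    have hzx' : z - x ≠ 0 := sub_ne_zero.mpr hzx
    rw [dslope_dslope_of_ne f hzx.symm, dslope_of_ne _ hzx, slope_def_field, dslope_of_ne _ hzx,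
      slope_def_field, dslope_same, sub_self, sub_zero]
    field_simp
    ring

end DSlope

theorem Differentiable.dslope {E : Type*} [NormedAddCommGroup E] [NormedSpace ℂ E]
    [CompleteSpace E] {f : ℂ → E} (hf : Differentiable ℂ f) (c : ℂ) :
    Differentiable ℂ (dslope f c) := by
  rw [← differentiableOn_univ]
  exact (Complex.differentiableOn_dslope Filter.univ_mem).mpr hf.differentiableOn

def stieltjesTransform (μ : Measure ℝ) (w : ℂ) : ℂ := ∫ x, ((x : ℂ) - w)⁻¹ ∂μ

theorem DiffContOnCl.circleIntegral_mul_inv_sub {f : ℂ → ℂ} {c w : ℂ} {R : ℝ}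
    (hf : DiffContOnCl ℂ f (ball c R)) (hw : w ∈ ball c R) :
    ∮ z in C(c, R), f z * (w - z)⁻¹ = -(2 * π * I) * f w := by
  have hneg : (fun z => f z * (w - z)⁻¹) = fun z => -1 * ((z - w)⁻¹ • f z) := by
    funext z
    rw [smul_eq_mul, ← neg_sub, inv_neg]
    ring
  rw [hneg, circleIntegral.integral_const_mul, hf.circleIntegral_sub_inv_smul hw, smul_eq_mul]
  ring

theorem le_norm_ofReal_sub_of_abs_le {x b R : ℝ} {w : ℂ} (hx : |x| ≤ b) (hw : ‖w‖ = R) :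
    R - b ≤ ‖(x : ℂ) - w‖ := by
  have := norm_sub_norm_le w (x : ℂ)
  rw [norm_sub_rev w, hw, Complex.norm_real, Real.norm_eq_abs] at this
  linarith

section Stieltjes

variable {μ : Measure ℝ} {f : ℂ → ℂ} {b R : ℝ}

/-- Integrated in `x` against `μ`, this is the integrand of
`∮ w in C(0, R), f w * stieltjesTransform μ w`; integrated in `θ`, it is a Cauchy integral. -/
def circleStieltjesIntegrand (f : ℂ → ℂ) (R θ x : ℝ) : ℂ :=
  deriv (circleMap 0 R) θ • (f (circleMap 0 R θ) * ((x : ℂ) - circleMap 0 R θ)⁻¹)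

theorem integral_circleStieltjesIntegrand (f : ℂ → ℂ) (R θ : ℝ) :
    ∫ x, circleStieltjesIntegrand f R θ x ∂μ =
      deriv (circleMap 0 R) θ •
        (f (circleMap 0 R θ) * stieltjesTransform μ (circleMap 0 R θ)) := by
  simp only [circleStieltjesIntegrand, stieltjesTransform, integral_smul, integral_const_mul]

variable [IsFiniteMeasure μ]

theorem integrable_circleStieltjesIntegrand (hf : DiffContOnCl ℂ f (ball 0 R)) (hb : 0 ≤ b)
    (hbR : b < R) (hμ : ∀ᵐ x ∂μ, |x| ≤ b) :
    Integrable (Function.uncurry (circleStieltjesIntegrand f R))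
      ((volume.restrict (Ι 0 (2 * π))).prod μ) := by
  have hR : 0 ≤ R := hb.trans hbR.le
  obtain ⟨C, hC⟩ := (isCompact_closedBall (0 : ℂ) R).exists_bound_of_continuousOn
    hf.continuousOn_ball
  have hmeas : AEStronglyMeasurable (Function.uncurry (circleStieltjesIntegrand f R))
      ((volume.restrict (Ι 0 (2 * π))).prod μ) := by
    have hcm : Measurable (circleMap 0 R) := (continuous_circleMap 0 R).measurable
    have hf' : Measurable fun θ => f (circleMap 0 R θ) :=
      (hf.continuousOn_ball.comp_continuous (continuous_circleMap 0 R)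
        (circleMap_mem_closedBall 0 hR)).measurable
    unfold circleStieltjesIntegrand Function.uncurry
    simp only [deriv_circleMap, smul_eq_mul]
    exact (((hcm.comp measurable_fst).mul_const I).mul ((hf'.comp measurable_fst).mul
      ((measurable_ofReal.comp measurable_snd).sub (hcm.comp measurable_fst)).inv))
      |>.aestronglyMeasurable
  have : IsFiniteMeasure (volume.restrict (Ι 0 (2 * π))) := by
    rw [uIoc_of_le two_pi_pos.le]; infer_instance
  have hC0 : 0 ≤ C := (norm_nonneg _).trans (hC 0 (mem_closedBall_self hR))
  refine Integrable.mono' (integrable_const (R * (C * (R - b)⁻¹))) hmeas ?_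
  have hae : ∀ᵐ p : ℝ × ℝ ∂(volume.restrict (Ι 0 (2 * π))).prod μ, |p.2| ≤ b :=
    Measure.quasiMeasurePreserving_snd.ae hμ
  filter_upwards [hae] with ⟨θ, x⟩ hx
  have hw : ‖circleMap 0 R θ‖ = R := by rw [norm_circleMap_zero, abs_of_nonneg hR]
  have hdist := le_norm_ofReal_sub_of_abs_le hx hw
  simp only [Function.uncurry, circleStieltjesIntegrand, deriv_circleMap, smul_eq_mul, norm_mul,
    norm_I, mul_one, hw, norm_inv]
  exact mul_le_mul_of_nonneg_left (mul_le_mul (hC _ (circleMap_mem_closedBall 0 hR θ))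
    (inv_anti₀ (sub_pos.2 hbR) hdist) (by positivity) hC0) hR

variable (hf : DiffContOnCl ℂ f (ball 0 R)) (hb : 0 ≤ b) (hbR : b < R) (hμ : ∀ᵐ x ∂μ, |x| ≤ b)
include hf hb hbR hμ

theorem circleIntegrable_mul_stieltjesTransform :
    CircleIntegrable (fun w => f w * stieltjesTransform μ w) 0 R := by
  rw [circleIntegrable_iff, intervalIntegrable_iff]
  simp_rw [← integral_circleStieltjesIntegrand]
  exact (integrable_circleStieltjesIntegrand hf hb hbR hμ).integral_prod_left

theorem circleIntegral_mul_stieltjesTransform :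
    ∮ w in C(0, R), f w * stieltjesTransform μ w = -(2 * π * I) * ∫ x, f x ∂μ := by
  have hcauchy : ∀ᵐ x ∂μ,
      ∫ θ in 0..2 * π, circleStieltjesIntegrand f R θ x = -(2 * π * I) * f x := by
    filter_upwards [hμ] with x hx
    refine hf.circleIntegral_mul_inv_sub ?_
    rw [mem_ball_zero_iff, norm_real, Real.norm_eq_abs]
    exact hx.trans_lt hbR
  calc ∮ w in C(0, R), f w * stieltjesTransform μ w
      = ∫ θ in 0..2 * π, ∫ x, circleStieltjesIntegrand f R θ x ∂μ := by
        simp_rw [integral_circleStieltjesIntegrand]; rfl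
    _ = ∫ x, (∫ θ in 0..2 * π, circleStieltjesIntegrand f R θ x) ∂μ :=
        intervalIntegral_integral_swap (integrable_circleStieltjesIntegrand hf hb hbR hμ)
    _ = ∫ x, -(2 * π * I) * f x ∂μ := integral_congr_ae hcauchy
    _ = -(2 * π * I) * ∫ x, f x ∂μ := integral_const_mul _ _

end Stieltjes

theorem integral_sub_integral_eq_circleIntegral {μ ν : Measure ℝ} [IsFiniteMeasure μ]
    [IsFiniteMeasure ν] {f : ℂ → ℂ} {b R : ℝ} (hf : DiffContOnCl ℂ f (ball 0 R)) (hb : 0 ≤ b)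
    (hbR : b < R) (hμ : ∀ᵐ x ∂μ, |x| ≤ b) (hν : ∀ᵐ x ∂ν, |x| ≤ b) :
    (∫ x, f x ∂μ) - ∫ x, f x ∂ν = -(1 / (2 * π * I)) *
      ∮ w in C(0, R), f w * (stieltjesTransform μ w - stieltjesTransform ν w) := by
  simp_rw [mul_sub]
  rw [circleIntegral.integral_sub (circleIntegrable_mul_stieltjesTransform hf hb hbR hμ)
      (circleIntegrable_mul_stieltjesTransform hf hb hbR hν),
    circleIntegral_mul_stieltjesTransform hf hb hbR hμ,
    circleIntegral_mul_stieltjesTransform hf hb hbR hν]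
  field_simp [two_pi_I_ne_zero]
  ring

theorem norm_two_pi_I_inv_mul_circleIntegral_mul_le {f k : ℂ → ℂ} {c : ℂ} {R Kf Kk : ℝ}
    (hR : 0 ≤ R) (hf : ∀ w ∈ sphere c R, ‖f w‖ ≤ Kf) (hk : ∀ w ∈ sphere c R, ‖k w‖ ≤ Kk) :
    ‖-(1 / (2 * π * I)) * ∮ w in C(c, R), f w * k w‖ ≤ 2 * π * R * Kf * Kk / (2 * π) := by
  have hKf : 0 ≤ Kf := (norm_nonneg _).trans (hf _ (circleMap_mem_sphere c hR 0))
  have hint : ‖∮ w in C(c, R), f w * k w‖ ≤ 2 * π * R * (Kf * Kk) :=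
    circleIntegral.norm_integral_le_of_norm_le_const hR fun w hw => by
      rw [norm_mul]
      exact mul_le_mul (hf w hw) (hk w hw) (norm_nonneg _) hKf
  have hnorm : ‖-(1 / (2 * π * I))‖ = 1 / (2 * π) := by
    simp [abs_of_pos pi_pos]
  rw [norm_mul, hnorm, one_div_mul_eq_div, mul_assoc]
  gcongr

theorem eq_dslope_dslope_deriv_div_two {V : ℂ → ℂ} (hV : Differentiable ℂ V) {g : ℂ → ℂ → ℂ}
    (hg : ∀ z x : ℂ, x ≠ z →
      g z x = (deriv V x - deriv V z - (x - z) * deriv (deriv V) z) / (2 * (x - z) ^ 2))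
    (hgd : ∀ z : ℂ, g z z = deriv (deriv (deriv V)) z / 4) (z x : ℂ) :
    g z x = dslope (dslope (deriv V) z) z x / 2 := by
  obtain rfl | hxz := eq_or_ne x z
  · rw [hgd, dslope_same, ← (hV.deriv.analyticAt x).two_smul_deriv_dslope_same, two_smul]
    ring
  · rw [hg z x hxz, dslope_dslope_of_ne _ hxz, div_div, mul_comm ((x - z) ^ 2)]

end

theorem stmt_18 (V : ℂ → ℂ) (hV : Differentiable ℂ V)
    (g : ℂ → ℂ → ℂ)
    (hg : ∀ z x : ℂ, x ≠ z →
      g z x = (deriv V x - deriv V z - (x - z) * deriv (deriv V) z) / (2 * (x - z) ^ 2))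
    (hgd : ∀ z : ℂ, g z z = deriv (deriv (deriv V)) z / 4)
    (μ ν : Measure ℝ) [IsFiniteMeasure μ] [IsFiniteMeasure ν]
    (b r : ℝ) (hb : 0 < b) (hr : 1 ≤ r)
    (hμ : μ {x : ℝ | b < |x|} = 0) (hν : ν {x : ℝ | b < |x|} = 0) :
    (∀ z : ℂ, Differentiable ℂ (fun x => g z x)) ∧
    (∀ x : ℂ, Differentiable ℂ (fun z => g z x)) ∧
    (∀ z : ℂ,
      (∫ x : ℝ, g z (x : ℂ) ∂μ) - (∫ x : ℝ, g z (x : ℂ) ∂ν)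
        = -(1 / (2 * Real.pi * Complex.I)) *
            ∮ w in C(0, b + r),
              g z w * ((∫ x : ℝ, ((x : ℂ) - w)⁻¹ ∂μ) - ∫ x : ℝ, ((x : ℂ) - w)⁻¹ ∂ν)) ∧
    (∀ z : ℂ, ∀ Kg Km : ℝ,
      (∀ w ∈ Metric.sphere (0 : ℂ) (b + r), ‖g z w‖ ≤ Kg) →
      (∀ w ∈ Metric.sphere (0 : ℂ) (b + r),
        ‖(∫ x : ℝ, ((x : ℂ) - w)⁻¹ ∂μ) - ∫ x : ℝ, ((x : ℂ) - w)⁻¹ ∂ν‖ ≤ Km) →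
      ‖(∫ x : ℝ, g z (x : ℂ) ∂μ) - (∫ x : ℝ, g z (x : ℂ) ∂ν)‖
        ≤ (2 * Real.pi * (b + r)) * Kg * Km / (2 * Real.pi)) := by
  have hkernel := eq_dslope_dslope_deriv_div_two hV hg hgd
  have hV' : Differentiable ℂ (deriv V) := hV.deriv
  have hentire (z : ℂ) : Differentiable ℂ (g z) := by
    simpa only [← funext (hkernel z)] using ((hV'.dslope z).dslope z).div_const 2
  have hbR : b < b + r := by linarith
  have hμ' : ∀ᵐ x ∂μ, |x| ≤ b := ae_iff.2 (by simpa only [not_le] using hμ)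
  have hν' : ∀ᵐ x ∂ν, |x| ≤ b := ae_iff.2 (by simpa only [not_le] using hν)
  have hcontour (z : ℂ) := integral_sub_integral_eq_circleIntegral (hentire z).diffContOnCl
    hb.le hbR hμ' hν'
  refine ⟨hentire, fun x => ?_, hcontour, fun z Kg Km hKg hKm => ?_⟩
  · simp only [hkernel, dslope_dslope_eq_neg_dslope_sub_deriv (hV'.analyticAt x)]
    exact (((hV'.dslope x).sub hV'.deriv).dslope x).neg.div_const 2
  · rw [hcontour z]
    exact norm_two_pi_I_inv_mul_circleIntegral_mul_le (by linarith) hKg hKm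
end
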